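/- Equivalently, if p_i^ss < 1 for all i, the steady-state infection probabilities satisfy (β_eq/δ) Σ_j a_ij p_j^ss = p_i^ss/(1 - p_i^ss) for each i, which is exactly the steady-state equation of the SIS N-intertwined model with infection rate β_eq. -/

import Mathlib

/-!
Eliminating the alert fraction `q` between the two equilibrium equations at a node leaves
`βa (β₀ + κ) (1 - p) s = δ (κ + βa) p`, where `s = ∑ⱼ aᵢⱼ pⱼ`; and `βa (β₀ + κ) / (κ + βa)` is
exactly `β_eq`. Dividing by `δ (κ + βa) (1 - p)` gives the SIS steady-state equation.
-/

lemma sais_effective_rate_eq {β₀ βa κ : ℝ} (hκ : κ ≠ 0) (hκβa : κ + βa ≠ 0) :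
    β₀ * (βa / κ) / (1 + βa / κ) + βa * (1 / (1 + βa / κ)) = βa * (β₀ + κ) / (κ + βa) := by
  rw [one_add_div hκ]
  field_simp

lemma sais_node_balance {β₀ βa κ δ p q s : ℝ}
    (hp : β₀ * (1 - p - q) * s + βa * q * s - δ * p = 0)
    (hq : κ * (1 - p - q) * s - βa * q * s = 0) :
    βa * (β₀ + κ) * (1 - p) * s = δ * (κ + βa) * p := by
  linear_combination (κ + βa) * hp + (βa - β₀) * hq

/-- when p_i^ss < 1, the SAIS equilibrium satisfies exactly the
SIS N-intertwined steady-state equation with rate β_eq. -/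
theorem steady_state_sis_form (N : ℕ) (a : Fin N → Fin N → ℝ)
    (β₀ βa κ δ : ℝ) (hκ : 0 < κ) (hβa : 0 ≤ βa) (hδ : 0 < δ)
    (pss qss : Fin N → ℝ) (hp01 : ∀ i, pss i ∈ Set.Ico (0:ℝ) 1)
    (heqp : ∀ i, β₀ * (1 - pss i - qss i) * (∑ j, a i j * pss j)
      + βa * qss i * (∑ j, a i j * pss j) - δ * pss i = 0)
    (heqq : ∀ i, κ * (1 - pss i - qss i) * (∑ j, a i j * pss j)
      - βa * qss i * (∑ j, a i j * pss j) = 0) :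
    ∀ i, ((β₀ * (βa / κ) / (1 + βa / κ) + βa * (1 / (1 + βa / κ))) / δ)
      * (∑ j, a i j * pss j) = pss i / (1 - pss i) := by
  intro i
  have hκβa : 0 < κ + βa := by linarith
  have h1p : 0 < 1 - pss i := sub_pos.2 (hp01 i).2
  have balance := sais_node_balance (heqp i) (heqq i)
  rw [sais_effective_rate_eq hκ.ne' hκβa.ne', eq_div_iff h1p.ne']
  field_simp
  linear_combination balance
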